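/- arXiv:1407.6771 — 3 statements merged into one kernel-verified Lean document; each statement's English description precedes it below -/
import Mathlib

section
/- The vector v defined by v i = (1 + d i) / (∑ j, (1 + d j)) is a stationary vector of the generation matrix: M.mulVec v = v, every entry v i is positive, and ∑ i, v i = 1. -/
open Filter Topology

theorem stmt2 (n : ℕ) (hn : 1 ≤ n) (G : SimpleGraph (Fin n)) [DecidableRel G.Adj]
    (M : Matrix (Fin n) (Fin n) ℝ)
    (hM : ∀ i j, M i j =
      if i = j ∨ G.Adj i j then 1 / (1 + (G.degree j : ℝ)) else 0)
    (v : Fin n → ℝ)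
    (hv : ∀ i, v i = (1 + (G.degree i : ℝ)) / (∑ j, (1 + (G.degree j : ℝ)))) :
    M.mulVec v = v ∧ (∀ i, 0 < v i) ∧ ∑ i, v i = 1 := by
  set S : ℝ := ∑ j, (1 + (G.degree j : ℝ)) with hSdef
  have hS : (0:ℝ) < S := by
    apply Finset.sum_pos
    · intro j _; positivity
    · exact ⟨⟨0, hn⟩, Finset.mem_univ _⟩
  have hpos : ∀ i, 0 < v i := by
    intro i
    rw [hv i]
    positivity
  refine ⟨?_, hpos, ?_⟩
  · funext i
    simp only [Matrix.mulVec, dotProduct]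
    have hterm : ∀ j, M i j * v j = if i = j ∨ G.Adj i j then 1 / S else 0 := by
      intro j
      rw [hM i j, hv j]
      by_cases h : i = j ∨ G.Adj i j
      · simp only [h, if_true]
        have hdj : (0:ℝ) < 1 + (G.degree j : ℝ) := by positivity
        field_simp
      · simp [h]
    rw [Finset.sum_congr rfl fun j _ => hterm j]
    rw [← Finset.sum_filter]
    have hfilter : Finset.univ.filter (fun j => i = j ∨ G.Adj i j)
        = insert i (G.neighborFinset i) := by
      ext j
      simp [eq_comm, G.adj_comm]
    rw [hfilter, Finset.sum_const, Finset.card_insert_of_notMem (by simp),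
      G.card_neighborFinset_eq_degree, hv i]
    ring
  · rw [Finset.sum_congr rfl fun i _ => hv i, ← Finset.sum_div, ← hSdef,
      div_self hS.ne']
end

section
/- If G is connected, then for every initial vector z0 : Fin n → ℝ the generation iteration converges: for each vertex i, (M^t z0) i tends, as t → ∞, to v i * (∑ j, z0 j), where v i = (1 + d i) / (∑ j, (1 + d j)). -/
/-!
The generation matrix `M` is column stochastic and fixes the vector `1 + d`; since `G` is
connected and every vertex is its own neighbour in `M`, the power `M ^ n` is entrywise positive.
A column-stochastic matrix whose entries are all at least `ε` shrinks the `ℓ¹` norm of zero-sum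
vectors by the factor `1 - n ε < 1` (Doeblin). Writing `z0 = (∑ z0) • v + w` with `∑ w = 0`, the
first part is fixed by `M` and `M ^ t w → 0` geometrically.
-/

open Filter Topology Finset Matrix

namespace Matrix

variable {ι : Type*} [Fintype ι] [DecidableEq ι] {A : Matrix ι ι ℝ}

theorem pow_apply_pos_of_le (hA : ∀ i j, 0 ≤ A i j)
    (hdiag : ∀ i, 0 < A i i) {k l : ℕ} (hkl : k ≤ l) {i j : ι} (hk : 0 < (A ^ k) i j) :
    0 < (A ^ l) i j := by
  induction l, hkl using Nat.le_induction with
  | base => exact hk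
  | succ l _ ih =>
    rw [pow_succ', mul_apply]
    exact sum_pos' (fun m _ => mul_nonneg (hA i m) (pow_apply_nonneg hA l m j))
      ⟨i, mem_univ i, mul_pos (hdiag i) ih⟩

theorem card_mul_le_one_of_le_apply (hA : A ∈ colStochastic ℝ ι) {ε : ℝ}
    (hε : ∀ i j, ε ≤ A i j) : Fintype.card ι * ε ≤ 1 := by
  cases isEmpty_or_nonempty ι with
  | inl _ => simp
  | inr h =>
    obtain ⟨j⟩ := h
    calc Fintype.card ι * ε = ∑ i, ε := by simp
      _ ≤ ∑ i, A i j := sum_le_sum fun i _ => hε i j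
      _ = 1 := sum_col_of_mem_colStochastic hA j

theorem sum_abs_mulVec_le_of_le_apply (hA : A ∈ colStochastic ℝ ι) {ε : ℝ}
    (hε : ∀ i j, ε ≤ A i j) {x : ι → ℝ} (hx : ∑ i, x i = 0) :
    ∑ i, |(A *ᵥ x) i| ≤ (1 - Fintype.card ι * ε) * ∑ i, |x i| := by
  have hrow : ∀ i, |(A *ᵥ x) i| ≤ ∑ j, (A i j - ε) * |x j| := fun i => by
    have : (A *ᵥ x) i = ∑ j, (A i j - ε) * x j := by
      simp only [mulVec, dotProduct, sub_mul, sum_sub_distrib, ← mul_sum, hx, mul_zero,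
        sub_zero]
    rw [this]
    refine (abs_sum_le_sum_abs _ _).trans_eq (sum_congr rfl fun j _ => ?_)
    rw [abs_mul, abs_of_nonneg (sub_nonneg.2 (hε i j))]
  calc ∑ i, |(A *ᵥ x) i| ≤ ∑ i, ∑ j, (A i j - ε) * |x j| := sum_le_sum fun i _ => hrow i
    _ = ∑ j, (∑ i, A i j - Fintype.card ι * ε) * |x j| := by
      rw [sum_comm]
      simp [← sum_mul, sum_sub_distrib]
    _ = (1 - Fintype.card ι * ε) * ∑ i, |x i| := by
      simp [sum_col_of_mem_colStochastic hA, mul_sum]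

theorem sum_abs_pow_mulVec_le (hA : A ∈ colStochastic ℝ ι) {m : ℕ} {ε : ℝ}
    (hε : ∀ i j, ε ≤ (A ^ m) i j) {x : ι → ℝ} (hx : ∑ i, x i = 0) (t : ℕ) :
    ∑ i, |(A ^ t *ᵥ x) i| ≤ (1 - Fintype.card ι * ε) ^ (t / m) * ∑ i, |x i| := by
  set e : ℕ → ℝ := fun t => ∑ i, |(A ^ t *ᵥ x) i|
  have hsum : ∀ t, ∑ i, (A ^ t *ᵥ x) i = 0 := fun t => by
    rw [sum_mulVec_of_mem_colStochastic (pow_mem hA t), hx]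
  have hanti : Antitone e := antitone_nat_of_succ_le fun t => by
    have := sum_abs_mulVec_le_of_le_apply hA (fun i j => hA.1 i j) (hsum t)
    simpa [e, pow_succ', ← mulVec_mulVec] using this
  have hblock : ∀ k, e (m * k) ≤ (1 - Fintype.card ι * ε) ^ k * e 0 := by
    intro k
    induction k with
    | zero => simp [e]
    | succ k ih =>
      have hc : 0 ≤ 1 - Fintype.card ι * ε :=
        sub_nonneg.2 (card_mul_le_one_of_le_apply (pow_mem hA m) hε)
      calc e (m * (k + 1)) ≤ (1 - Fintype.card ι * ε) * e (m * k) := by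
            have := sum_abs_mulVec_le_of_le_apply (pow_mem hA m) hε (hsum (m * k))
            simpa [e, show m * (k + 1) = m + m * k by ring, pow_add, ← mulVec_mulVec]
              using this
        _ ≤ (1 - Fintype.card ι * ε) ^ (k + 1) * e 0 := by
            rw [pow_succ', mul_assoc]; exact mul_le_mul_of_nonneg_left ih hc
  simpa [e] using (hanti (Nat.mul_div_le t m)).trans (hblock (t / m))

theorem tendsto_pow_mulVec_nhds_zero [Nonempty ι] (hA : A ∈ colStochastic ℝ ι)
    (hprim : A.IsPrimitive) {x : ι → ℝ} (hx : ∑ i, x i = 0) :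
    Tendsto (fun t => A ^ t *ᵥ x) atTop (𝓝 0) := by
  obtain ⟨m, hm, hpos⟩ := hprim.exists_pos_pow
  obtain ⟨p, hp⟩ := Finite.exists_min fun p : ι × ι => (A ^ m) p.1 p.2
  set c := 1 - Fintype.card ι * (A ^ m) p.1 p.2
  have hc0 : 0 ≤ c :=
    sub_nonneg.2 (card_mul_le_one_of_le_apply (pow_mem hA m) fun i j => hp (i, j))
  have hc1 : c < 1 := by
    have := hpos p.1 p.2
    simp only [c]; nlinarith [show (0 : ℝ) < Fintype.card ι from Nat.cast_pos.2 Fintype.card_pos]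
  have hgeom : Tendsto (fun t => c ^ (t / m) * ∑ i, |x i|) atTop (𝓝 0) := by
    simpa using ((tendsto_pow_atTop_nhds_zero_of_lt_one hc0 hc1).comp
      (Nat.tendsto_div_const_atTop hm.ne')).mul_const (∑ i, |x i|)
  refine tendsto_pi_nhds.2 fun i => squeeze_zero_norm (fun t => ?_) hgeom
  calc ‖(A ^ t *ᵥ x) i‖ ≤ ∑ i, |(A ^ t *ᵥ x) i| :=
        single_le_sum (f := fun i => |(A ^ t *ᵥ x) i|) (fun _ _ => abs_nonneg _) (mem_univ i)
    _ ≤ c ^ (t / m) * ∑ i, |x i| := sum_abs_pow_mulVec_le hA (fun i j => hp (i, j)) hx t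

theorem tendsto_pow_mulVec_of_isPrimitive [Nonempty ι] (hA : A ∈ colStochastic ℝ ι)
    (hprim : A.IsPrimitive) {v : ι → ℝ} (hv : A *ᵥ v = v) (hv1 : ∑ i, v i = 1) (z : ι → ℝ) :
    Tendsto (fun t => A ^ t *ᵥ z) atTop (𝓝 ((∑ i, z i) • v)) := by
  set w := z - (∑ i, z i) • v
  have hw : ∑ i, w i = 0 := by simp [w, sum_sub_distrib, ← mul_sum, hv1]
  have hpow : ∀ t, A ^ t *ᵥ v = v := fun t => by
    induction t with
    | zero => simp
    | succ t ih => rw [pow_succ, ← mulVec_mulVec, hv, ih]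
  have hsplit : ∀ t, A ^ t *ᵥ z = A ^ t *ᵥ w + (∑ i, z i) • v := fun t => by
    simp [w, mulVec_sub, mulVec_smul, hpow]
  simpa [hsplit] using (tendsto_pow_mulVec_nhds_zero hA hprim hw).add_const ((∑ i, z i) • v)

end Matrix

namespace SimpleGraph

variable {V : Type*} [Fintype V] [DecidableEq V] (G : SimpleGraph V)

theorem pow_apply_pos_of_walk {A : Matrix V V ℝ} (hA : ∀ i j, 0 ≤ A i j)
    (hadj : ∀ i j, G.Adj i j → 0 < A i j) {i j : V} (p : G.Walk i j) :
    0 < (A ^ p.length) i j := by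
  induction p with
  | nil => simp
  | cons hab q ih =>
    rw [Walk.length_cons, pow_succ', mul_apply]
    exact sum_pos' (fun l _ => mul_nonneg (hA _ l) (pow_apply_nonneg hA _ l _))
      ⟨_, mem_univ _, mul_pos (hadj _ _ hab) ih⟩

theorem isPrimitive_of_connected {A : Matrix V V ℝ} (hA : ∀ i j, 0 ≤ A i j)
    (hdiag : ∀ i, 0 < A i i) (hadj : ∀ i j, G.Adj i j → 0 < A i j) (hG : G.Connected) :
    A.IsPrimitive := by
  refine ⟨hA, Fintype.card V, Fintype.card_pos_iff.2 hG.nonempty, fun i j => ?_⟩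
  obtain ⟨p, hp⟩ := (hG.preconnected i j).exists_isPath
  exact pow_apply_pos_of_le hA hdiag hp.length_lt.le (G.pow_apply_pos_of_walk hA hadj p)

variable [DecidableRel G.Adj]

noncomputable def generationMatrix : Matrix V V ℝ :=
  Matrix.of fun i j => if i = j ∨ G.Adj i j then 1 / (1 + (G.degree j : ℝ)) else 0

theorem card_filter_eq_or_adj (i : V) : #{j | i = j ∨ G.Adj i j} = G.degree i + 1 := by
  have : ({j | i = j ∨ G.Adj i j} : Finset V) = insert i (G.neighborFinset i) := by
    ext j; simp [eq_comm]
  rw [this, card_insert_of_notMem (by simp), card_neighborFinset_eq_degree]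

theorem generationMatrix_mem_colStochastic : G.generationMatrix ∈ colStochastic ℝ V := by
  refine mem_colStochastic_iff_sum.2 ⟨fun i j => ?_, fun j => ?_⟩
  · simp only [generationMatrix, of_apply]; split_ifs <;> positivity
  · have : ∀ i, G.generationMatrix i j =
        if j = i ∨ G.Adj j i then 1 / (1 + (G.degree j : ℝ)) else 0 := fun i => by
      simp [generationMatrix, eq_comm, G.adj_comm]
    simp only [this, sum_ite, sum_const_zero, add_zero, sum_const, card_filter_eq_or_adj,
      nsmul_eq_mul]
    push_cast
    rw [add_comm]
    exact mul_one_div_cancel (by positivity)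

theorem generationMatrix_mulVec_one_add_degree :
    G.generationMatrix *ᵥ (fun i => 1 + (G.degree i : ℝ)) = fun i => 1 + (G.degree i : ℝ) := by
  ext i
  have : ∀ j, G.generationMatrix i j * (1 + G.degree j) = if i = j ∨ G.Adj i j then 1 else 0 :=
    fun j => by
      simp only [generationMatrix, of_apply]
      split_ifs <;> simp [(by positivity : (1 + (G.degree j : ℝ)) ≠ 0)]
  simp only [mulVec, dotProduct, this, sum_boole, card_filter_eq_or_adj]
  push_cast; ring

theorem isPrimitive_generationMatrix (hG : G.Connected) : G.generationMatrix.IsPrimitive := by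
  refine G.isPrimitive_of_connected (generationMatrix_mem_colStochastic G).1 (fun i => ?_)
    (fun i j hij => ?_) hG
  · simp only [generationMatrix, of_apply, true_or, if_true]; positivity
  · simp only [generationMatrix, of_apply, hij, or_true, if_true]; positivity

end SimpleGraph

theorem stmt4_general (n : ℕ) (G : SimpleGraph (Fin n)) [DecidableRel G.Adj]
    (M : Matrix (Fin n) (Fin n) ℝ)
    (hM : ∀ i j, M i j =
      if i = j ∨ G.Adj i j then 1 / (1 + (G.degree j : ℝ)) else 0)
    (hG : G.Connected)
    (v : Fin n → ℝ)
    (hv : ∀ i, v i = (1 + (G.degree i : ℝ)) / (∑ j, (1 + (G.degree j : ℝ)))) :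
    ∀ (z0 : Fin n → ℝ) (i : Fin n),
      Tendsto (fun t => ((M ^ t).mulVec z0) i) atTop (𝓝 (v i * ∑ j, z0 j)) := by
  intro z0 i
  have := hG.nonempty
  obtain rfl : M = G.generationMatrix := Matrix.ext hM
  set d : Fin n → ℝ := fun i => 1 + (G.degree i : ℝ)
  have hd : 0 < ∑ j, d j := sum_pos (fun j _ => by positivity) univ_nonempty
  obtain rfl : v = (∑ j, d j)⁻¹ • d := funext fun i => by simp [hv, d, div_eq_inv_mul]
  have hfix : G.generationMatrix *ᵥ (∑ j, d j)⁻¹ • d = (∑ j, d j)⁻¹ • d := by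
    rw [mulVec_smul, G.generationMatrix_mulVec_one_add_degree]
  have hsum : ∑ j, ((∑ j, d j)⁻¹ • d) j = 1 := by
    simp [← mul_sum, inv_mul_cancel₀ hd.ne']
  have := tendsto_pi_nhds.1 (tendsto_pow_mulVec_of_isPrimitive
    G.generationMatrix_mem_colStochastic (G.isPrimitive_generationMatrix hG) hfix hsum z0) i
  simpa [mul_comm] using this

theorem stmt4 (n : ℕ) (hn : 1 ≤ n) (G : SimpleGraph (Fin n)) [DecidableRel G.Adj]
    (M : Matrix (Fin n) (Fin n) ℝ)
    (hM : ∀ i j, M i j =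
      if i = j ∨ G.Adj i j then 1 / (1 + (G.degree j : ℝ)) else 0)
    (hG : G.Connected)
    (v : Fin n → ℝ)
    (hv : ∀ i, v i = (1 + (G.degree i : ℝ)) / (∑ j, (1 + (G.degree j : ℝ)))) :
    ∀ (z0 : Fin n → ℝ) (i : Fin n),
      Tendsto (fun t => ((M ^ t).mulVec z0) i) atTop (𝓝 (v i * ∑ j, z0 j)) :=
  stmt4_general n G M hM hG v hv
end

section
/- If G is connected, then the Metropolis consensus iteration converges to the average: for every g0 : Fin n → ℝ and every vertex i, (W^t g0) i tends, as t → ∞, to (1/n) * ∑ j, g0 j. -/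
open Filter Topology Finset

namespace Stmt11Aux

variable {n : ℕ}

lemma mulVec_eq (B : Matrix (Fin n) (Fin n) ℝ) (v : Fin n → ℝ) (i : Fin n) :
    B.mulVec v i = ∑ j, B i j * v j := rfl

lemma pow_nonneg' (W : Matrix (Fin n) (Fin n) ℝ) (h : ∀ i j, 0 ≤ W i j) (k : ℕ) :
    ∀ i j, 0 ≤ (W ^ k) i j := by
  induction k with
  | zero => intro i j; by_cases hij : i = j <;> simp [Matrix.one_apply, hij]
  | succ k ih =>
    intro i j
    rw [pow_succ', Matrix.mul_apply]
    exact Finset.sum_nonneg fun l _ => mul_nonneg (h i l) (ih l j)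

lemma pow_rowsum (W : Matrix (Fin n) (Fin n) ℝ) (h : ∀ i, ∑ j, W i j = 1) (k : ℕ) :
    ∀ i, ∑ j, (W ^ k) i j = 1 := by
  induction k with
  | zero => intro i; simp [Matrix.one_apply]
  | succ k ih =>
    intro i
    simp only [pow_succ', Matrix.mul_apply]
    rw [Finset.sum_comm]
    simp_rw [← Finset.mul_sum]
    simp_rw [ih]
    simpa using h i

lemma pow_colsum (W : Matrix (Fin n) (Fin n) ℝ) (h : ∀ j, ∑ i, W i j = 1) (k : ℕ) :
    ∀ j, ∑ i, (W ^ k) i j = 1 := by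
  induction k with
  | zero => intro j; simp [Matrix.one_apply]
  | succ k ih =>
    intro j
    simp only [pow_succ, Matrix.mul_apply]
    rw [Finset.sum_comm]
    simp_rw [← Finset.sum_mul]
    simp_rw [ih]
    simpa using h j

lemma mulVec_le_sup (hne : (univ : Finset (Fin n)).Nonempty)
    (A : Matrix (Fin n) (Fin n) ℝ) (h0 : ∀ i j, 0 ≤ A i j) (h1 : ∀ i, ∑ j, A i j = 1)
    (g : Fin n → ℝ) (i : Fin n) : A.mulVec g i ≤ univ.sup' hne g := by
  rw [mulVec_eq]
  calc ∑ j, A i j * g j ≤ ∑ j, A i j * univ.sup' hne g :=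
        Finset.sum_le_sum fun j _ =>
          mul_le_mul_of_nonneg_left (Finset.le_sup' g (Finset.mem_univ j)) (h0 i j)
    _ = univ.sup' hne g := by rw [← Finset.sum_mul, h1, one_mul]

lemma inf_le_mulVec (hne : (univ : Finset (Fin n)).Nonempty)
    (A : Matrix (Fin n) (Fin n) ℝ) (h0 : ∀ i j, 0 ≤ A i j) (h1 : ∀ i, ∑ j, A i j = 1)
    (g : Fin n → ℝ) (i : Fin n) : univ.inf' hne g ≤ A.mulVec g i := by
  rw [mulVec_eq]
  calc univ.inf' hne g = ∑ j, A i j * univ.inf' hne g := by rw [← Finset.sum_mul, h1, one_mul]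
    _ ≤ ∑ j, A i j * g j :=
        Finset.sum_le_sum fun j _ =>
          mul_le_mul_of_nonneg_left (Finset.inf'_le g (Finset.mem_univ j)) (h0 i j)

lemma mulVec_contract (hne : (univ : Finset (Fin n)).Nonempty)
    (A : Matrix (Fin n) (Fin n) ℝ) (h0 : ∀ i j, 0 ≤ A i j) (h1 : ∀ i, ∑ j, A i j = 1)
    (ε : ℝ) (hε : ∀ i j, ε ≤ A i j) (g : Fin n → ℝ) (i : Fin n) :
    A.mulVec g i ≤ univ.sup' hne g - ε * (univ.sup' hne g - univ.inf' hne g) := by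
  set M := univ.sup' hne g with hM
  set m := univ.inf' hne g with hm
  have hMj : ∀ j, g j ≤ M := fun j => Finset.le_sup' g (Finset.mem_univ j)
  obtain ⟨j0, -, hj0⟩ := Finset.exists_mem_eq_inf' hne g
  have key : ε * (M - m) ≤ ∑ j, A i j * (M - g j) := by
    have h2 : ε * (M - m) ≤ A i j0 * (M - g j0) := by
      rw [hm, hj0]
      exact mul_le_mul_of_nonneg_right (hε i j0) (sub_nonneg.2 (hMj j0))
    exact h2.trans (Finset.single_le_sum
      (fun j _ => mul_nonneg (h0 i j) (sub_nonneg.2 (hMj j))) (Finset.mem_univ j0))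
  have expand : ∑ j, A i j * (M - g j) = M - A.mulVec g i := by
    rw [mulVec_eq]
    simp_rw [mul_sub]
    rw [Finset.sum_sub_distrib, ← Finset.sum_mul, h1, one_mul]
  linarith [key, expand]

end Stmt11Aux
open Stmt11Aux in
theorem stmt11 (n : ℕ) (hn : 1 ≤ n) (G : SimpleGraph (Fin n)) [DecidableRel G.Adj]
    (W : Matrix (Fin n) (Fin n) ℝ)
    (hW : ∀ i j, W i j =
      if G.Adj i j then 1 / (1 + (max (G.degree i) (G.degree j) : ℝ))
      else if i = j then
        1 - ∑ k ∈ G.neighborFinset i, 1 / (1 + (max (G.degree i) (G.degree k) : ℝ))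
      else 0)
    (hG : G.Connected) :
    ∀ (g0 : Fin n → ℝ) (i : Fin n),
      Tendsto (fun t => ((W ^ t).mulVec g0) i) atTop
        (𝓝 ((1 / (n : ℝ)) * ∑ j, g0 j)) := by
  intro g0 i
  haveI : Nonempty (Fin n) := ⟨⟨0, hn⟩⟩
  have hne : (Finset.univ : Finset (Fin n)).Nonempty := Finset.univ_nonempty
  -- basic entry facts
  have hsumle : ∀ i : Fin n,
      ∑ k ∈ G.neighborFinset i, 1 / (1 + (max (G.degree i) (G.degree k) : ℝ)) ≤
        (G.degree i : ℝ) * (1 / (1 + (G.degree i : ℝ))) := by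
    intro i
    have hpos : (0:ℝ) < 1 + (G.degree i : ℝ) := by positivity
    have hterm : ∀ k ∈ G.neighborFinset i,
        1 / (1 + (max (G.degree i) (G.degree k) : ℝ)) ≤ 1 / (1 + (G.degree i : ℝ)) := by
      intro k _
      apply one_div_le_one_div_of_le hpos
      have : (G.degree i : ℝ) ≤ (max (G.degree i : ℝ) (G.degree k : ℝ)) :=
        le_max_left _ _
      linarith
    calc ∑ k ∈ G.neighborFinset i, 1 / (1 + (max (G.degree i) (G.degree k) : ℝ))
        ≤ (G.neighborFinset i).card • (1 / (1 + (G.degree i : ℝ))) :=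
          Finset.sum_le_card_nsmul _ _ _ hterm
      _ = (G.degree i : ℝ) * (1 / (1 + (G.degree i : ℝ))) := by
          rw [G.card_neighborFinset_eq_degree i, nsmul_eq_mul]
  have hsumlt : ∀ i : Fin n,
      ∑ k ∈ G.neighborFinset i, 1 / (1 + (max (G.degree i) (G.degree k) : ℝ)) < 1 := by
    intro i
    have hpos : (0:ℝ) < 1 + (G.degree i : ℝ) := by positivity
    have h2 : (G.degree i : ℝ) * (1 / (1 + (G.degree i : ℝ))) < 1 := by
      rw [mul_one_div, div_lt_one hpos]; linarith
    exact lt_of_le_of_lt (hsumle i) h2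
  have hdiag : ∀ i : Fin n, 0 < W i i := by
    intro i
    rw [hW, if_neg (G.irrefl), if_pos rfl]
    linarith [hsumlt i]
  have hadjpos : ∀ {i j : Fin n}, G.Adj i j → 0 < W i j := by
    intro i j h
    rw [hW, if_pos h]
    positivity
  have hnonneg : ∀ i j : Fin n, 0 ≤ W i j := by
    intro i j
    rw [hW]
    split_ifs with h1 h2
    · positivity
    · subst h2; linarith [hsumlt i]
    · exact le_refl 0
  have hrow : ∀ i : Fin n, ∑ j, W i j = 1 := by
    intro i
    have hzero : ∀ j ∈ (Finset.univ : Finset (Fin n)),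
        j ∉ insert i (G.neighborFinset i) → W i j = 0 := by
      intro j _ hj
      simp only [Finset.mem_insert, SimpleGraph.mem_neighborFinset, not_or] at hj
      rw [hW, if_neg hj.2, if_neg (fun h => hj.1 h.symm)]
    rw [← Finset.sum_subset (Finset.subset_univ _) hzero]
    rw [Finset.sum_insert (by simp [SimpleGraph.mem_neighborFinset])]
    have hnb : ∀ j ∈ G.neighborFinset i,
        W i j = 1 / (1 + (max (G.degree i) (G.degree j) : ℝ)) := by
      intro j hj
      rw [hW, if_pos (by simpa [SimpleGraph.mem_neighborFinset] using hj)]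
    rw [Finset.sum_congr rfl hnb, hW, if_neg (G.irrefl), if_pos rfl]
    ring
  have hsymm : ∀ i j : Fin n, W i j = W j i := by
    intro i j
    rw [hW, hW]
    by_cases h : G.Adj i j
    · rw [if_pos h, if_pos h.symm, max_comm]
    · have h' : ¬ G.Adj j i := fun hh => h hh.symm
      by_cases hij : i = j
      · subst hij; rfl
      · rw [if_neg h, if_neg h', if_neg hij, if_neg (Ne.symm hij)]
  have hcol : ∀ j : Fin n, ∑ i, W i j = 1 := by
    intro j
    rw [Finset.sum_congr rfl (fun i _ => hsymm i j)]
    exact hrow j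
  -- positivity of entries of W ^ k when dist ≤ k
  have hpownn : ∀ k, ∀ i j : Fin n, 0 ≤ (W ^ k) i j := pow_nonneg' W hnonneg
  have hpowpos : ∀ k, ∀ i j : Fin n, G.dist i j ≤ k → 0 < (W ^ k) i j := by
    intro k
    induction k with
    | zero =>
      intro i j hd
      have hij : i = j := by
        rcases (SimpleGraph.dist_eq_zero_iff_eq_or_not_reachable).1 (Nat.le_zero.1 hd) with h | h
        · exact h
        · exact absurd (hG.preconnected i j) h
      subst hij
      simp [Matrix.one_apply]
    | succ k ih =>
      intro i j hd
      rw [pow_succ', Matrix.mul_apply]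
      by_cases hij : i = j
      · subst hij
        calc (0:ℝ) < W i i * (W ^ k) i i :=
              mul_pos (hdiag i) (ih i i (by simp [SimpleGraph.dist_self]))
          _ ≤ ∑ l, W i l * (W ^ k) l i :=
              Finset.single_le_sum
                (fun l _ => mul_nonneg (hnonneg i l) (hpownn k l i)) (Finset.mem_univ i)
      · obtain ⟨p, hp⟩ := (hG.preconnected i j).exists_walk_length_eq_dist
        cases p with
        | nil => exact absurd rfl hij
        | @cons _ l _ hadj q =>
          have hdl : G.dist l j ≤ k := by
            have hq := SimpleGraph.dist_le q
            simp only [SimpleGraph.Walk.length_cons] at hp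
            omega
          calc (0:ℝ) < W i l * (W ^ k) l j := mul_pos (hadjpos hadj) (ih l j hdl)
            _ ≤ ∑ x, W i x * (W ^ k) x j :=
              Finset.single_le_sum
                (fun x _ => mul_nonneg (hnonneg i x) (hpownn k x j)) (Finset.mem_univ l)
  have hdistle : ∀ i j : Fin n, G.dist i j ≤ n := by
    intro i j
    obtain ⟨w⟩ := hG.preconnected i j
    have h1 := SimpleGraph.dist_le (w.toPath : G.Walk i j)
    have h2 := (w.toPath.prop).length_lt
    simp only [Fintype.card_fin] at h2
    omega
  set A := W ^ n with hA
  have hApos : ∀ i j : Fin n, 0 < A i j := fun i j => hpowpos n i j (hdistle i j)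
  have hArow : ∀ i : Fin n, ∑ j, A i j = 1 := pow_rowsum W hrow n
  have hAnn : ∀ i j : Fin n, 0 ≤ A i j := fun i j => (hApos i j).le
  -- minimal entry ε
  obtain ⟨p0, -, hmin⟩ := Finset.exists_min_image (Finset.univ : Finset (Fin n × Fin n))
    (fun p => A p.1 p.2) Finset.univ_nonempty
  set ε := A p0.1 p0.2 with hε
  have hεpos : 0 < ε := hApos _ _
  have hεle : ∀ i j : Fin n, ε ≤ A i j := fun i j => hmin (i, j) (Finset.mem_univ _)
  have hε1 : ε ≤ 1 := by
    calc ε ≤ ∑ j, A p0.1 j :=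
          Finset.single_le_sum (fun j _ => hAnn p0.1 j) (Finset.mem_univ p0.2)
      _ = 1 := hArow p0.1
  -- the iterates
  set g : ℕ → Fin n → ℝ := fun t => (W ^ t).mulVec g0 with hg
  set M : ℕ → ℝ := fun t => Finset.univ.sup' hne (g t) with hM
  set m : ℕ → ℝ := fun t => Finset.univ.inf' hne (g t) with hm
  have hgstep : ∀ t, g (t + 1) = W.mulVec (g t) := by
    intro t
    rw [hg]
    simp only
    rw [Matrix.mulVec_mulVec, ← pow_succ']
  have hgjump : ∀ t, g (t + n) = A.mulVec (g t) := by
    intro t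
    rw [hg]
    simp only
    rw [Matrix.mulVec_mulVec, hA, ← pow_add, Nat.add_comm t n]
  have hmle : ∀ t j, m t ≤ g t j := fun t j => Finset.inf'_le _ (Finset.mem_univ j)
  have hleM : ∀ t j, g t j ≤ M t := fun t j => Finset.le_sup' _ (Finset.mem_univ j)
  have hmM : ∀ t, m t ≤ M t := fun t => (hmle t i).trans (hleM t i)
  have hMstep : ∀ t, M (t + 1) ≤ M t := by
    intro t
    apply Finset.sup'_le
    intro j _
    rw [hgstep t]
    exact mulVec_le_sup hne W hnonneg hrow (g t) j
  have hmstep : ∀ t, m t ≤ m (t + 1) := by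
    intro t
    apply Finset.le_inf'
    intro j _
    rw [hgstep t]
    exact inf_le_mulVec hne W hnonneg hrow (g t) j
  have hoscA : Antitone (fun t => M t - m t) := by
    apply antitone_nat_of_succ_le
    intro t
    have := hMstep t
    have := hmstep t
    linarith
  have hMjump : ∀ t, M (t + n) ≤ M t - ε * (M t - m t) := by
    intro t
    apply Finset.sup'_le
    intro j _
    rw [hgjump t]
    exact mulVec_contract hne A hAnn hArow ε hεle (g t) j
  have hmjump : ∀ t, m t ≤ m (t + n) := by
    intro t
    apply Finset.le_inf'
    intro j _
    rw [hgjump t]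
    exact inf_le_mulVec hne A hAnn hArow (g t) j
  have hcontr : ∀ t, M (t + n) - m (t + n) ≤ (1 - ε) * (M t - m t) := by
    intro t
    have h1 := hMjump t
    have h2 := hmjump t
    nlinarith [hmM t]
  have hgeom : ∀ q : ℕ, M (n * q) - m (n * q) ≤ (1 - ε) ^ q * (M 0 - m 0) := by
    intro q
    induction q with
    | zero => simp
    | succ q ih =>
      have h1 : n * (q + 1) = n * q + n := by ring
      rw [h1]
      calc M (n * q + n) - m (n * q + n) ≤ (1 - ε) * (M (n * q) - m (n * q)) := hcontr _
        _ ≤ (1 - ε) * ((1 - ε) ^ q * (M 0 - m 0)) :=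
            mul_le_mul_of_nonneg_left ih (by linarith)
        _ = (1 - ε) ^ (q + 1) * (M 0 - m 0) := by ring
  have hoscbound : ∀ t, M t - m t ≤ (1 - ε) ^ (t / n) * (M 0 - m 0) := by
    intro t
    have h1 : n * (t / n) ≤ t := Nat.mul_div_le t n
    exact (hoscA h1).trans (hgeom (t / n))
  -- sum conservation and average
  have hsum : ∀ t, ∑ j, g t j = ∑ j, g0 j := by
    intro t
    rw [hg]
    simp only
    have : ∀ j : Fin n, (W ^ t).mulVec g0 j = ∑ l, (W ^ t) j l * g0 l := fun j => rfl
    rw [Finset.sum_congr rfl (fun j _ => this j)]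
    rw [Finset.sum_comm]
    simp_rw [← Finset.sum_mul]
    rw [Finset.sum_congr rfl (fun l _ => by rw [pow_colsum W hcol t l])]
    simp
  set avg := (1 / (n : ℝ)) * ∑ j, g0 j with havg
  have hnpos : (0:ℝ) < n := by exact_mod_cast hn
  have havg_mem : ∀ t, m t ≤ avg ∧ avg ≤ M t := by
    intro t
    have hlow : (n : ℝ) * m t ≤ ∑ j, g t j := by
      calc (n : ℝ) * m t = ∑ _j : Fin n, m t := by simp [Finset.sum_const, mul_comm]
        _ ≤ ∑ j, g t j := Finset.sum_le_sum (fun j _ => hmle t j)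
    have hhigh : ∑ j, g t j ≤ (n : ℝ) * M t := by
      calc ∑ j, g t j ≤ ∑ _j : Fin n, M t := Finset.sum_le_sum (fun j _ => hleM t j)
        _ = (n : ℝ) * M t := by simp [Finset.sum_const, mul_comm]
    rw [hsum t] at hlow hhigh
    constructor
    · rw [havg]; rw [div_mul_eq_mul_div, le_div_iff₀ hnpos]  -- avg = (∑)/n
      linarith
    · rw [havg]; rw [div_mul_eq_mul_div, div_le_iff₀ hnpos]
      linarith
  have hdistb : ∀ t, |g t i - avg| ≤ M t - m t := by
    intro t
    rw [abs_le]
    have h1 := (havg_mem t).1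
    have h2 := (havg_mem t).2
    have h3 := hmle t i
    have h4 := hleM t i
    constructor <;> linarith
  -- limit
  have hdivtop : Tendsto (fun t : ℕ => t / n) atTop atTop := by
    apply Filter.tendsto_atTop_atTop.2
    intro b
    refine ⟨n * b, fun t ht => ?_⟩
    rw [Nat.le_div_iff_mul_le (by omega)]
    calc b * n = n * b := Nat.mul_comm b n
      _ ≤ t := ht
  have hpowlim : Tendsto (fun t : ℕ => (1 - ε) ^ (t / n) * (M 0 - m 0)) atTop (𝓝 0) := by
    have h1 : Tendsto (fun q : ℕ => (1 - ε) ^ q) atTop (𝓝 0) :=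
      tendsto_pow_atTop_nhds_zero_of_lt_one (by linarith) (by linarith)
    have h2 := (h1.comp hdivtop).mul_const (M 0 - m 0)
    simpa using h2
  have hosc0 : Tendsto (fun t => M t - m t) atTop (𝓝 0) :=
    squeeze_zero (fun t => by linarith [hmM t]) hoscbound hpowlim
  have hfinal : Tendsto (fun t => |g t i - avg|) atTop (𝓝 0) :=
    squeeze_zero (fun t => abs_nonneg _) hdistb hosc0
  rw [tendsto_iff_dist_tendsto_zero]
  simpa [Real.dist_eq] using hfinal
end
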